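/- Let N ≥ 1 and let φ, ψ ∈ ℂ^N. Assume that for every k = 0, 1, …, 2N−2: |P_φ(k/(2N−1))| = |P_ψ(k/(2N−1))| and |P_φ((k+1)/(2N−1)) − P_φ(k/(2N−1))| = |P_ψ((k+1)/(2N−1)) − P_ψ(k/(2N−1))|. Then there exists λ ∈ ℂ with |λ| = 1 such that ψ = λ·φ. -/

import Mathlib

/-!
With `M = 2N - 1` and `ω = e^{2πi/M}`, the samples are the values of the polynomials `p, q` with
coefficients `ψ, φ` at the `M`-th roots of unity. For `n = N - 1` let `p̃ = X^n · p̄(1/X)`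
(`conjReflect n p`); on the unit circle `p · p̃ = z^n |p|²`. Products such as `p · p̃` have degree
`2n < M`, so they are determined by their values at the roots of unity. Writing `σ` for
`X ↦ ωX`, the moduli give `p p̃ = q q̃` and `σp (σp)~ = σq (σq)~`, and the moduli of the
differences give `σp · p̃ + p · (σp)~ = σq · q̃ + q · (σq)~`. So the pairs
`{σp · p̃, p · (σp)~}` and `{σq · q̃, q · (σq)~}` have equal sums and products, hence coincide.
Matching them crosswise forces `p` and `q` to be constant (leading coefficients give
`ω^(deg p + n) = ω^(deg q̃)` with both exponents below `M`), so in all cases `σp · p̃ = σq · q̃`.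
Then `p / q` is invariant under `X ↦ ωX`, hence under every `X ↦ ω^k X`, which makes `p` a
multiple of `q`.
-/

open Real

/-- The analytic trigonometric polynomial `P_ψ(x) = ∑ ψ_j e^{2πijx}` associated to `ψ ∈ ℂ^N`. -/
noncomputable def trigPoly {N : ℕ} (ψ : Fin N → ℂ) (x : ℝ) : ℂ :=
  ∑ j : Fin N, ψ j * Complex.exp (2 * Real.pi * Complex.I * (j : ℕ) * x)

open Polynomial ComplexConjugate

lemma conj_mul_self_of_norm_eq_one {z : ℂ} (hz : ‖z‖ = 1) : conj z * z = 1 := by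
  rw [Complex.conj_mul', hz]
  simp

lemma mul_conj_add_mul_conj (x y : ℂ) :
    x * conj y + y * conj x = ‖x‖ ^ 2 + ‖y‖ ^ 2 - ‖x - y‖ ^ 2 := by
  push_cast [← Complex.mul_conj']
  rw [map_sub]
  ring

noncomputable def conjReflect (n : ℕ) (p : ℂ[X]) : ℂ[X] := (p.map (starRingEnd ℂ)).reflect n

section ConjReflect

variable {n : ℕ} {p : ℂ[X]}

lemma natDegree_conjReflect_le (hp : p.natDegree ≤ n) : (conjReflect n p).natDegree ≤ n :=
  natDegree_reflect_le.trans (max_le le_rfl (natDegree_map_le.trans hp))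

lemma conjReflect_ne_zero (hp : p ≠ 0) : conjReflect n p ≠ 0 := by
  simpa [conjReflect, reflect_eq_zero_iff] using hp

lemma eval_conjReflect (hp : p.natDegree ≤ n) {z : ℂ} (hz : ‖z‖ = 1) :
    (conjReflect n p).eval z = z ^ n * conj (p.eval z) := by
  have hzz := conj_mul_self_of_norm_eq_one hz
  let _ : Invertible (conj z) := ⟨z, by rwa [mul_comm], hzz⟩
  have h := eval₂_reflect_mul_pow (RingHom.id ℂ) (conj z) n (p.map (starRingEnd ℂ))
    (natDegree_map_le.trans hp)
  rw [show ⅟(conj z) = z from rfl, ← eval, eval₂_map, RingHom.id_comp, eval₂_at_apply] at h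
  rw [conjReflect, ← h, mul_comm, mul_assoc, ← mul_pow, hzz, one_pow, mul_one]

lemma conjReflect_comp_C_mul_X (hp : p.natDegree ≤ n) {c : ℂ} (hc : ‖c‖ = 1) :
    conjReflect n (p.comp (C c * X)) = C (conj c ^ n) * (conjReflect n p).comp (C c * X) := by
  ext i
  rw [coeff_C_mul]
  simp only [conjReflect, coeff_reflect, coeff_map, comp_C_mul_X_coeff, map_mul, map_pow]
  rcases le_or_gt i n with hi | hi
  · rw [revAt_le hi]
    have : conj c ^ (n - i) = conj c ^ n * c ^ i := by
      rw [← Nat.sub_add_cancel hi, pow_add, Nat.add_sub_cancel, mul_assoc,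
        pow_mul_pow_eq_one i (conj_mul_self_of_norm_eq_one hc), mul_one]
    rw [this]
    ring
  · rw [revAt_eq_self_of_lt hi, coeff_eq_zero_of_natDegree_lt (hp.trans_lt hi)]
    simp

end ConjReflect

section Dilation

variable {p q : ℂ[X]} {c : ℂ}

lemma natDegree_comp_C_mul_X (hc : c ≠ 0) : (p.comp (C c * X)).natDegree = p.natDegree := by
  rw [natDegree_comp, natDegree_C_mul_X c hc, mul_one]

lemma leadingCoeff_comp_C_mul_X (hc : c ≠ 0) :
    (p.comp (C c * X)).leadingCoeff = p.leadingCoeff * c ^ p.natDegree := by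
  rw [leadingCoeff_comp (by rw [natDegree_C_mul_X c hc]; exact one_ne_zero), leadingCoeff_C_mul_X]

lemma comp_C_mul_X_comp_C_mul_X (d : ℂ) :
    (p.comp (C c * X)).comp (C d * X) = p.comp (C (c * d) * X) := by
  rw [comp_assoc, mul_comp, C_comp, X_comp, C_mul, mul_assoc]

lemma comp_C_pow_mul_X_mul_eq (hc : c ≠ 0) (hq : q ≠ 0)
    (h : p.comp (C c * X) * q = q.comp (C c * X) * p) (k : ℕ) :
    p.comp (C (c ^ k) * X) * q = q.comp (C (c ^ k) * X) * p := by
  induction k with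
  | zero => simp [mul_comm]
  | succ k ih =>
    have hσ := congrArg (fun r => r.comp (C c * X) * q) ih
    simp only [mul_comp, comp_C_mul_X_comp_C_mul_X, ← pow_succ] at hσ
    refine mul_left_cancel₀
      ((comp_C_mul_X_eq_zero_iff (mem_nonZeroDivisors_of_ne_zero hc)).not.2 hq) ?_
    linear_combination hσ + q.comp (C (c ^ (k + 1)) * X) * h

end Dilation

section RootsOfUnity

variable {M n : ℕ} {ω : ℂ} {p q : ℂ[X]}

lemma IsPrimitiveRoot.mul_pow_eq_one (hω : IsPrimitiveRoot ω M) {z : ℂ} (hz : z ^ M = 1) :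
    (ω * z) ^ M = 1 := by
  rw [mul_pow, hω.pow_eq_one, hz, one_mul]

lemma eq_of_eval_eq_of_pow_eq_one (hω : IsPrimitiveRoot ω M) (hp : p.natDegree < M)
    (hq : q.natDegree < M) (h : ∀ z : ℂ, z ^ M = 1 → p.eval z = q.eval z) : p = q :=
  eq_of_natDegree_lt_card_of_eval_eq' p q (nthRootsFinset M (1 : ℂ))
    (fun z hz => h z ((mem_nthRootsFinset (by omega) 1).1 hz))
    (by rw [hω.card_nthRootsFinset]; omega)

lemma exists_pow_eq_one_eval_ne_zero (hω : IsPrimitiveRoot ω M) (hp : p ≠ 0)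
    (hdeg : p.natDegree < M) : ∃ z : ℂ, z ^ M = 1 ∧ p.eval z ≠ 0 := by
  by_contra! h
  exact hp (eq_of_eval_eq_of_pow_eq_one hω hdeg (by simp; omega) (by simpa using h))

lemma natDegree_mul_conjReflect_lt (hM : 2 * n < M) (hp : p.natDegree ≤ n)
    (hq : q.natDegree ≤ n) : (p * conjReflect n q).natDegree < M :=
  natDegree_mul_le.trans_lt (by linarith [natDegree_conjReflect_le (n := n) hq])

lemma mul_conjReflect_eq_of_norm_eval_eq (hω : IsPrimitiveRoot ω M) (hM : 2 * n < M)
    (hp : p.natDegree ≤ n) (hq : q.natDegree ≤ n)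
    (h : ∀ z : ℂ, z ^ M = 1 → ‖p.eval z‖ = ‖q.eval z‖) :
    p * conjReflect n p = q * conjReflect n q := by
  refine eq_of_eval_eq_of_pow_eq_one hω (natDegree_mul_conjReflect_lt hM hp hp)
    (natDegree_mul_conjReflect_lt hM hq hq) fun z hz => ?_
  have hz1 : ‖z‖ = 1 := Complex.norm_eq_one_of_pow_eq_one hz (by omega)
  rw [eval_mul, eval_mul, eval_conjReflect hp hz1, eval_conjReflect hq hz1, mul_left_comm,
    Complex.mul_conj', mul_left_comm (q.eval z), Complex.mul_conj', h z hz]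

lemma comp_mul_conjReflect_add_eq_of_norm_eval_sub_eq (hω : IsPrimitiveRoot ω M)
    (hM : 2 * n < M) (hp : p.natDegree ≤ n) (hq : q.natDegree ≤ n)
    (hmod : ∀ z : ℂ, z ^ M = 1 → ‖p.eval z‖ = ‖q.eval z‖)
    (hdiff : ∀ z : ℂ, z ^ M = 1 →
      ‖p.eval (ω * z) - p.eval z‖ = ‖q.eval (ω * z) - q.eval z‖) :
    p.comp (C ω * X) * conjReflect n p + p * conjReflect n (p.comp (C ω * X)) =
      q.comp (C ω * X) * conjReflect n q + q * conjReflect n (q.comp (C ω * X)) := by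
  have hω0 : ω ≠ 0 := hω.ne_zero (by omega)
  have hσp : (p.comp (C ω * X)).natDegree ≤ n := (natDegree_comp_C_mul_X hω0).trans_le hp
  have hσq : (q.comp (C ω * X)).natDegree ≤ n := (natDegree_comp_C_mul_X hω0).trans_le hq
  refine eq_of_eval_eq_of_pow_eq_one hω
    ((natDegree_add_le _ _).trans_lt (max_lt
      (natDegree_mul_conjReflect_lt hM hσp hp) (natDegree_mul_conjReflect_lt hM hp hσp)))
    ((natDegree_add_le _ _).trans_lt (max_lt
      (natDegree_mul_conjReflect_lt hM hσq hq) (natDegree_mul_conjReflect_lt hM hq hσq)))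
    fun z hz => ?_
  have hz1 : ‖z‖ = 1 := Complex.norm_eq_one_of_pow_eq_one hz (by omega)
  have eval_cross : ∀ r : ℂ[X], r.natDegree ≤ n →
      (r.comp (C ω * X) * conjReflect n r + r * conjReflect n (r.comp (C ω * X))).eval z =
        z ^ n * (r.eval (ω * z) * conj (r.eval z) + r.eval z * conj (r.eval (ω * z))) := by
    intro r hr
    rw [eval_add, eval_mul, eval_mul, eval_conjReflect hr hz1,
      eval_conjReflect ((natDegree_comp_C_mul_X hω0).trans_le hr) hz1]
    simp only [eval_comp, eval_mul, eval_C, eval_X]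
    ring
  rw [eval_cross p hp, eval_cross q hq, mul_conj_add_mul_conj, mul_conj_add_mul_conj, hmod z hz,
    hmod _ (hω.mul_pow_eq_one hz), hdiff z hz]

lemma natDegree_eq_zero_of_comp_mul_conjReflect_eq (hω : IsPrimitiveRoot ω M)
    (hM : 2 * n < M) (hp : p.natDegree ≤ n) (hq : q.natDegree ≤ n) (hq0 : q ≠ 0)
    (h₀ : p * conjReflect n p = q * conjReflect n q)
    (h : p.comp (C ω * X) * conjReflect n p = q * conjReflect n (q.comp (C ω * X))) :
    p.natDegree = 0 := by
  have hω0 : ω ≠ 0 := hω.ne_zero (by omega)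
  have hω1 : ‖ω‖ = 1 := hω.norm'_eq_one (by omega)
  have hωω : conj ω ^ n * ω ^ n = 1 := pow_mul_pow_eq_one n (conj_mul_self_of_norm_eq_one hω1)
  rw [conjReflect_comp_C_mul_X hq hω1] at h
  have hL := congrArg leadingCoeff h
  have hL₀ := congrArg leadingCoeff h₀
  simp only [leadingCoeff_mul, leadingCoeff_C, leadingCoeff_comp_C_mul_X hω0] at hL hL₀
  have hL0 : q.leadingCoeff * (conjReflect n q).leadingCoeff ≠ 0 :=
    mul_ne_zero (leadingCoeff_ne_zero.2 hq0) (leadingCoeff_ne_zero.2 (conjReflect_ne_zero hq0))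
  have hpow : ω ^ (p.natDegree + n) = ω ^ (conjReflect n q).natDegree := by
    refine mul_right_cancel₀ hL0 ?_
    linear_combination ω ^ n * hL - ω ^ p.natDegree * ω ^ n * hL₀ +
      q.leadingCoeff * (conjReflect n q).leadingCoeff * ω ^ (conjReflect n q).natDegree * hωω
  have hdeg := natDegree_conjReflect_le hq
  have := hω.pow_inj (by omega) (by omega) hpow
  omega

lemma comp_mul_conjReflect_eq (hω : IsPrimitiveRoot ω M) (hM : 2 * n < M)
    (hp : p.natDegree ≤ n) (hq : q.natDegree ≤ n) (hp0 : p ≠ 0) (hq0 : q ≠ 0)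
    (h₀ : p * conjReflect n p = q * conjReflect n q)
    (h₁ : p.comp (C ω * X) * conjReflect n (p.comp (C ω * X)) =
      q.comp (C ω * X) * conjReflect n (q.comp (C ω * X)))
    (h₂ : p.comp (C ω * X) * conjReflect n p + p * conjReflect n (p.comp (C ω * X)) =
      q.comp (C ω * X) * conjReflect n q + q * conjReflect n (q.comp (C ω * X))) :
    p.comp (C ω * X) * conjReflect n p = q.comp (C ω * X) * conjReflect n q := by
  -- `h₀`, `h₁` and `h₂` say the two pairs have equal products and equal sums.
  have hquad : (p.comp (C ω * X) * conjReflect n p - q.comp (C ω * X) * conjReflect n q) *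
      (p.comp (C ω * X) * conjReflect n p - q * conjReflect n (q.comp (C ω * X))) = 0 := by
    linear_combination p.comp (C ω * X) * conjReflect n p * h₂ -
      p.comp (C ω * X) * conjReflect n (p.comp (C ω * X)) * h₀ - q * conjReflect n q * h₁
  rcases mul_eq_zero.1 hquad with h | h
  · exact sub_eq_zero.1 h
  · have hp' := natDegree_eq_zero_of_comp_mul_conjReflect_eq hω hM hp hq hq0 h₀ (sub_eq_zero.1 h)
    have hq' := natDegree_eq_zero_of_comp_mul_conjReflect_eq hω hM hq hp hp0 h₀.symm
      (by linear_combination h - h₂)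
    have hσp : p.comp (C ω * X) = p := by rw [eq_C_of_natDegree_eq_zero hp', C_comp]
    have hσq : q.comp (C ω * X) = q := by rw [eq_C_of_natDegree_eq_zero hq', C_comp]
    rw [hσp, hσq, h₀]

lemma comp_mul_eq_of_comp_mul_conjReflect_eq (hp0 : p ≠ 0) (hq0 : q ≠ 0)
    (h₀ : p * conjReflect n p = q * conjReflect n q)
    (h : p.comp (C ω * X) * conjReflect n p = q.comp (C ω * X) * conjReflect n q) :
    p.comp (C ω * X) * q = q.comp (C ω * X) * p := by
  refine mul_right_cancel₀
    (mul_ne_zero (conjReflect_ne_zero (n := n) hp0) (conjReflect_ne_zero (n := n) hq0)) ?_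
  linear_combination q * conjReflect n q * h - q.comp (C ω * X) * conjReflect n q * h₀

lemma eq_C_mul_of_comp_mul_eq (hω : IsPrimitiveRoot ω M) (hp : p.natDegree < M)
    (hq : q.natDegree < M) (hq0 : q ≠ 0) (h : p.comp (C ω * X) * q = q.comp (C ω * X) * p)
    {z : ℂ} (hz : z ^ M = 1) (hqz : q.eval z ≠ 0) : p = C (p.eval z / q.eval z) * q := by
  have _ : NeZero M := ⟨by omega⟩
  have hz0 : z ≠ 0 := by
    rintro rfl
    exact zero_ne_one ((zero_pow (by omega)).symm.trans hz)
  refine eq_of_eval_eq_of_pow_eq_one hω hp (natDegree_C_mul_le _ _ |>.trans_lt hq) fun w hw => ?_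
  obtain ⟨k, -, hk⟩ := hω.eq_pow_of_pow_eq_one (ξ := w / z) (by rw [div_pow, hw, hz, div_one])
  have hrel := congrArg (eval z) (comp_C_pow_mul_X_mul_eq (hω.ne_zero (by omega)) hq0 h k)
  simp only [eval_mul, eval_comp, eval_C, eval_X, hk, div_mul_cancel₀ _ hz0] at hrel
  rw [eval_mul, eval_C]
  field_simp
  linear_combination hrel

theorem exists_norm_eq_one_eq_C_mul_of_norm_eval_eq (hω : IsPrimitiveRoot ω M) (hM : 2 * n < M)
    (hp : p.natDegree ≤ n) (hq : q.natDegree ≤ n)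
    (hmod : ∀ z : ℂ, z ^ M = 1 → ‖p.eval z‖ = ‖q.eval z‖)
    (hdiff : ∀ z : ℂ, z ^ M = 1 →
      ‖p.eval (ω * z) - p.eval z‖ = ‖q.eval (ω * z) - q.eval z‖) :
    ∃ l : ℂ, ‖l‖ = 1 ∧ p = C l * q := by
  by_cases hq0 : q = 0
  · refine ⟨1, norm_one, ?_⟩
    subst hq0
    refine eq_of_eval_eq_of_pow_eq_one hω (by omega) (by simp; omega) fun z hz => ?_
    simpa using hmod z hz
  obtain ⟨z, hz, hqz⟩ := exists_pow_eq_one_eval_ne_zero hω hq0 (by omega)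
  have hp0 : p ≠ 0 := by
    rintro rfl
    exact hqz (by simpa using (hmod z hz).symm)
  have hω0 : ω ≠ 0 := hω.ne_zero (by omega)
  have E₀ := mul_conjReflect_eq_of_norm_eval_eq hω hM hp hq hmod
  have E₁ := mul_conjReflect_eq_of_norm_eval_eq hω hM ((natDegree_comp_C_mul_X hω0).trans_le hp)
    ((natDegree_comp_C_mul_X hω0).trans_le hq) fun z hz => by
      simpa using hmod _ (hω.mul_pow_eq_one hz)
  have E₂ := comp_mul_conjReflect_add_eq_of_norm_eval_sub_eq hω hM hp hq hmod hdiff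
  have hrel := comp_mul_eq_of_comp_mul_conjReflect_eq hp0 hq0 E₀
    (comp_mul_conjReflect_eq hω hM hp hq hp0 hq0 E₀ E₁ E₂)
  refine ⟨_, ?_, eq_C_mul_of_comp_mul_eq hω (by omega) (by omega) hq0 hrel hz hqz⟩
  rw [norm_div, hmod z hz, div_self (norm_ne_zero_iff.2 hqz)]

end RootsOfUnity

lemma trigPoly_div_eq_eval {N : ℕ} (v : Fin N → ℂ) (m k : ℕ) :
    trigPoly v (k / m) = (ofFn N v).eval (Complex.exp (2 * π * Complex.I / m) ^ k) := by
  rw [trigPoly, ofFn_eq_sum_monomial, eval_finsetSum]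
  refine Finset.sum_congr rfl fun j _ => ?_
  rw [eval_monomial, ← pow_mul, ← Complex.exp_nat_mul]
  push_cast
  ring_nf

theorem samples_modulus_and_discrete_deriv_modulus_determine
    (N : ℕ) (hN : 1 ≤ N) (φ ψ : Fin N → ℂ)
    (h1 : ∀ k : ℕ, k ≤ 2 * N - 2 →
      ‖trigPoly φ (k / (2 * N - 1))‖
        = ‖trigPoly ψ (k / (2 * N - 1))‖)
    (h2 : ∀ k : ℕ, k ≤ 2 * N - 2 →
      ‖trigPoly φ ((k + 1) / (2 * N - 1)) - trigPoly φ (k / (2 * N - 1))‖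
        = ‖trigPoly ψ ((k + 1) / (2 * N - 1)) - trigPoly ψ (k / (2 * N - 1))‖) :
    ∃ l : ℂ, ‖l‖ = 1 ∧ ψ = fun j => l * φ j := by
  have hM : ((2 * N - 1 : ℕ) : ℝ) = 2 * N - 1 := by
    push_cast [Nat.cast_sub (by omega : 1 ≤ 2 * N)]
    ring
  have hω := Complex.isPrimitiveRoot_exp (2 * N - 1) (by omega)
  have _ : NeZero (2 * N - 1) := ⟨by omega⟩
  have hsample : ∀ z : ℂ, z ^ (2 * N - 1) = 1 → ∃ k ≤ 2 * N - 2,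
      z = Complex.exp (2 * π * Complex.I / (2 * N - 1 : ℕ)) ^ k := fun z hz => by
    obtain ⟨k, hk, rfl⟩ := hω.eq_pow_of_pow_eq_one hz
    exact ⟨k, by omega, rfl⟩
  obtain ⟨l, hl, hψφ⟩ := exists_norm_eq_one_eq_C_mul_of_norm_eval_eq hω (n := N - 1) (by omega)
    (Nat.le_pred_of_lt (ofFn_natDegree_lt hN ψ)) (Nat.le_pred_of_lt (ofFn_natDegree_lt hN φ))
    (fun z hz => by
      obtain ⟨k, hk, rfl⟩ := hsample z hz
      simpa [← hM, trigPoly_div_eq_eval] using (h1 k hk).symm)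
    (fun z hz => by
      obtain ⟨k, hk, rfl⟩ := hsample z hz
      have := h2 k hk
      rw [← hM, show (k : ℝ) + 1 = (k + 1 : ℕ) by push_cast; ring, trigPoly_div_eq_eval,
        trigPoly_div_eq_eval, trigPoly_div_eq_eval, trigPoly_div_eq_eval, pow_succ'] at this
      exact this.symm)
  exact ⟨l, hl, funext fun j => by simpa using congrArg (coeff · j) hψφ⟩
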